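/- arXiv:1109.1236 — 7 statements merged into one kernel-verified Lean document; each statement's English description precedes it below -/
import Mathlib

section
/- For a prime p, natural numbers k and s, and c with 0 < c < p-1, the sum over all tuples (r_1,...,r_{p-1}) of nonnegative integers with r_1+...+r_{p-1} = (p-1)s + c of the product C(k,r_1)···C(k,r_{p-1})·1^{r_1}·2^{r_2}···(p-1)^{r_{p-1}} is congruent to 0 mod p. -/
open Finset

/-- For a prime `p`, `k s : ℕ`, and `0 < c < p-1`, the sum over all tuples
`(r_1,…,r_{p-1})` of nonnegative integers with `Σ r_i = (p-1)s + c` of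
`C(k,r_1)···C(k,r_{p-1})·1^{r_1}·2^{r_2}···(p-1)^{r_{p-1}}`
is divisible by `p`. -/
theorem weighted_binomial_sum_eq_zero (p k s c : ℕ) (hp : p.Prime)
    (hc0 : 0 < c) (hc : c < p - 1) :
    (p : ℤ) ∣ ∑ r ∈ Finset.Nat.antidiagonalTuple (p - 1) ((p - 1) * s + c),
      ∏ i : Fin (p - 1), (k.choose (r i) : ℤ) * ((i : ℕ) + 1) ^ (r i) := by
  haveI : Fact p.Prime := ⟨hp⟩
  set n := (p - 1) * s + c with hn
  -- the weight function
  set e : Fin (p - 1) → ZMod p := fun i => (((i : ℕ) + 1 : ℕ) : ZMod p) with he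
  set S : ZMod p := ∑ r ∈ Finset.Nat.antidiagonalTuple (p - 1) n, ∏ i, (k.choose (r i) : ZMod p) * (e i) ^ (r i) with hS
  have hlt : ∀ i : Fin (p - 1), (i : ℕ) + 1 < p := fun i => by
    have := i.isLt; omega
  have hene : ∀ i, e i ≠ 0 := by
    intro i h
    rw [he, ZMod.natCast_eq_zero_iff] at h
    have := Nat.le_of_dvd (Nat.succ_pos _) h
    have := hlt i; omega
  -- the bijection with nonzero elements
  have hinj : Function.Injective (fun i : Fin (p - 1) => (⟨e i, hene i⟩ : {a : ZMod p // a ≠ 0})) := by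
    intro i j hij
    have h2 := congrArg (fun a => ZMod.val a.1) hij
    simp only [he, ZMod.val_natCast_of_lt (hlt i), ZMod.val_natCast_of_lt (hlt j)] at h2
    exact Fin.ext (by omega)
  have hcardNZ : Fintype.card {a : ZMod p // a ≠ 0} = p - 1 := by
    rw [← Fintype.card_eq.2 ⟨unitsEquivNeZero (G₀ := ZMod p)⟩, ZMod.card_units_eq_totient,
      Nat.totient_prime hp]
  have hbij : Function.Bijective (fun i : Fin (p - 1) => (⟨e i, hene i⟩ : {a : ZMod p // a ≠ 0})) :=
    (Fintype.bijective_iff_injective_and_card _).2 ⟨hinj, by simp [hcardNZ]⟩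
  set ee : Fin (p - 1) ≃ {a : ZMod p // a ≠ 0} := Equiv.ofBijective _ hbij with hee
  -- a generator of the unit group
  obtain ⟨g, hg⟩ := IsCyclic.exists_generator (α := (ZMod p)ˣ)
  have hcard : Fintype.card (ZMod p)ˣ = p - 1 := by
    rw [ZMod.card_units_eq_totient, Nat.totient_prime hp]
  have hgord : orderOf g = p - 1 := by
    rw [orderOf_eq_card_of_forall_mem_zpowers hg, Nat.card_eq_fintype_card, hcard]
  have hndvd : ¬ (p - 1) ∣ n := by
    intro h
    have hdc : (p - 1) ∣ c := (Nat.dvd_add_right (Dvd.intro s rfl)).mp h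
    exact absurd (Nat.le_of_dvd hc0 hdc) (by omega)
  have hg1 : (g : ZMod p) ^ n ≠ 1 := by
    intro h
    have hu : g ^ n = 1 := Units.ext (by rw [Units.val_pow_eq_pow_val, h, Units.val_one])
    exact hndvd (hgord ▸ orderOf_dvd_of_pow_eq_one hu)
  -- multiplication by g as a permutation
  have hmulinj : Function.Injective (fun a : {a : ZMod p // a ≠ 0} =>
      (⟨(g : ZMod p) * a, mul_ne_zero (Units.ne_zero g) a.2⟩ : {a : ZMod p // a ≠ 0})) := by
    intro a b hab
    exact Subtype.ext (mul_left_cancel₀ (Units.ne_zero g) (congrArg Subtype.val hab))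
  set mulG : {a : ZMod p // a ≠ 0} ≃ {a : ZMod p // a ≠ 0} :=
    Equiv.ofBijective _ (Finite.injective_iff_bijective.mp hmulinj) with hmulG
  set σ : Fin (p - 1) ≃ Fin (p - 1) := ee.trans (mulG.trans ee.symm) with hσdef
  have hσ : ∀ i, e (σ i) = (g : ZMod p) * e i := by
    intro i
    have h1 : ee (σ i) = mulG (ee i) := by
      simp [hσdef]
    have := congrArg Subtype.val h1
    simpa [hee, hmulG, Equiv.ofBijective_apply] using this
  -- the key identity
  have key : (g : ZMod p) ^ n * S = S := by
    calc (g : ZMod p) ^ n * S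
        = ∑ r ∈ Finset.Nat.antidiagonalTuple (p - 1) n, ∏ i, (k.choose (r i) : ZMod p) * ((g : ZMod p) * e i) ^ (r i) := by
          rw [hS, Finset.mul_sum]
          refine Finset.sum_congr rfl fun r hr => ?_
          rw [Finset.Nat.mem_antidiagonalTuple] at hr
          have h1 : ∀ i : Fin (p - 1), (k.choose (r i) : ZMod p) * ((g : ZMod p) * e i) ^ (r i)
              = (g : ZMod p) ^ (r i) * ((k.choose (r i) : ZMod p) * (e i) ^ (r i)) := by
            intro i; rw [mul_pow]; ring
          rw [Finset.prod_congr rfl fun i _ => h1 i]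
          conv_rhs => rw [Finset.prod_mul_distrib, Finset.prod_pow_eq_pow_sum, hr]
      _ = ∑ r ∈ Finset.Nat.antidiagonalTuple (p - 1) n, ∏ i, (k.choose (r i) : ZMod p) * (e (σ i)) ^ (r i) := by
          simp_rw [hσ]
      _ = S := by
          rw [hS]
          refine Finset.sum_bij' (fun r _ => r ∘ σ.symm) (fun r _ => r ∘ σ) ?_ ?_ ?_ ?_ ?_
          · intro r hr
            simp only [Finset.Nat.mem_antidiagonalTuple] at hr ⊢
            rw [← hr]
            exact Equiv.sum_comp σ.symm r
          · intro r hr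
            simp only [Finset.Nat.mem_antidiagonalTuple] at hr ⊢
            rw [← hr]
            exact Equiv.sum_comp σ r
          · intro r _; ext i; simp
          · intro r _; ext i; simp
          · intro r _
            rw [← Equiv.prod_comp σ
              (fun j => (k.choose ((r ∘ σ.symm) j) : ZMod p) * (e j) ^ ((r ∘ σ.symm) j))]
            simp
  have hS0 : S = 0 := by
    have h2 : ((g : ZMod p) ^ n - 1) * S = 0 := by rw [sub_mul, key, one_mul, sub_self]
    rcases mul_eq_zero.mp h2 with h | h
    · exact absurd (sub_eq_zero.mp h) hg1
    · exact h
  rw [← ZMod.intCast_zmod_eq_zero_iff_dvd]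
  push_cast
  rw [← hS0, hS]
  refine Finset.sum_congr rfl fun r _ => Finset.prod_congr rfl fun i _ => ?_
  simp [he]
end

section
/- For a prime p and natural numbers k and s, the sum over all tuples (r_1,...,r_{p-1}) of nonnegative integers with r_1+...+r_{p-1} = (p-1)s of the product C(k,r_1)···C(k,r_{p-1})·1^{r_1}·2^{r_2}···(p-1)^{r_{p-1}} is congruent to (-1)^s·C(k,s) mod p. -/
/-!
The nonzero residues mod `p` are the roots of `X ^ (p - 1) - 1` and multiply to `-1`, so
`∏_{a ∈ 𝔽_pˣ} (1 + a X) = 1 - X ^ (p - 1)`. Raising to the `k`-th power, the sum in question is the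
coefficient of `X ^ ((p - 1) s)` in `(1 - X ^ (p - 1)) ^ k`, which is `(-1) ^ s * C(k, s)`.
-/

open Polynomial Finset

theorem PowerSeries.coeff_prod_eq_sum_antidiagonalTuple {R : Type*} [CommSemiring R] {k : ℕ}
    (f : Fin k → PowerSeries R) (n : ℕ) :
    coeff n (∏ i, f i) = ∑ r ∈ Nat.antidiagonalTuple k n, ∏ i, coeff (r i) (f i) := by
  rw [coeff_prod, ← piAntidiag_univ_fin_eq_antidiagonalTuple, finsuppAntidiag, sum_map]
  exact sum_attach _ fun r : Fin k → ℕ => ∏ i, coeff (r i) (f i)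

namespace Polynomial

variable {R : Type*}

theorem coeff_prod_eq_sum_antidiagonalTuple [CommSemiring R] {k : ℕ} (f : Fin k → R[X]) (n : ℕ) :
    (∏ i, f i).coeff n = ∑ r ∈ Nat.antidiagonalTuple k n, ∏ i, (f i).coeff (r i) := by
  simpa [← coeff_coe, ← coeToPowerSeries.ringHom_apply] using
    PowerSeries.coeff_prod_eq_sum_antidiagonalTuple (fun i => (f i : PowerSeries R)) n

theorem coeff_one_add_C_mul_X_pow [CommSemiring R] (a : R) (k m : ℕ) :
    ((1 + C a * X) ^ k).coeff m = k.choose m * a ^ m := by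
  have h : (1 + C a * X) ^ k = ((1 + X) ^ k).comp (C a * X) := by simp
  rw [h, comp_C_mul_X_coeff, coeff_one_add_X_pow]

theorem coeff_one_sub_X_pow_pow_mul [CommRing R] {n : ℕ} (hn : 0 < n) (k s : ℕ) :
    ((1 - X ^ n : R[X]) ^ k).coeff (s * n) = (-1) ^ s * k.choose s := by
  have h : (1 - X ^ n : R[X]) ^ k = expand R n ((1 + C (-1) * X) ^ k) := by
    simp [sub_eq_add_neg]
  rw [h, coeff_expand_mul hn, coeff_one_add_C_mul_X_pow, mul_comm]

end Polynomial

theorem Fintype.prod_eq_mul_prod_units {G₀ M : Type*} [GroupWithZero G₀] [Fintype G₀]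
    [Fintype G₀ˣ] [CommMonoid M] (f : G₀ → M) : ∏ a, f a = f 0 * ∏ u : G₀ˣ, f u := by
  classical
  rw [prod_eq_mul_prod_compl 0, Finset.prod_subtype {0}ᶜ (p := (· ≠ 0)) (by simp)]
  exact congrArg _ (prod_equiv unitsEquivNeZero _ _ fun _ => rfl).symm

namespace FiniteField

variable {K : Type*} [Field K] [Fintype K]

theorem prod_X_sub_C_eq_X_pow_card_sub_X : ∏ a : K, (X - C a) = X ^ Fintype.card K - X := by
  have hq : 1 < Fintype.card K := Fintype.one_lt_card
  have hmonic : (X ^ Fintype.card K - X : K[X]).Monic :=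
    monic_X_pow_sub (by simpa using (Nat.one_lt_cast.mpr hq : (1 : WithBot ℕ) < _))
  have hroots : Multiset.card (X ^ Fintype.card K - X : K[X]).roots
      = (X ^ Fintype.card K - X : K[X]).natDegree := by
    rw [roots_X_pow_card_sub_X, X_pow_card_sub_X_natDegree_eq K hq]
    rfl
  rw [← prod_multiset_X_sub_C_of_monic_of_roots_card_eq hmonic hroots, roots_X_pow_card_sub_X]
  rfl

theorem prod_units_X_sub_C [DecidableEq K] :
    ∏ u : Kˣ, (X - C (u : K)) = X ^ (Fintype.card K - 1) - 1 := by
  apply mul_left_cancel₀ (X_ne_zero (R := K))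
  have h := prod_X_sub_C_eq_X_pow_card_sub_X (K := K)
  rw [Fintype.prod_eq_mul_prod_units, C_0, sub_zero] at h
  rw [h, mul_sub, mul_one, ← pow_succ', Nat.sub_add_cancel Fintype.card_pos]

theorem prod_units_one_add_C_mul_X [DecidableEq K] :
    ∏ u : Kˣ, (1 + C (u : K) * X) = 1 - X ^ (Fintype.card K - 1) := by
  have hfactor (u : Kˣ) : 1 + C (u : K) * X = C (u : K) * (X - C ((-u⁻¹ : Kˣ) : K)) := by
    rw [Units.val_neg, map_neg, sub_neg_eq_add, mul_add, ← map_mul, Units.mul_inv, map_one,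
      add_comm]
  have hreindex : ∏ u : Kˣ, (X - C ((-u⁻¹ : Kˣ) : K)) = ∏ u : Kˣ, (X - C (u : K)) :=
    Fintype.prod_equiv ((Equiv.inv _).trans (Equiv.neg _)) _ _ fun _ => rfl
  rw [Fintype.prod_congr _ _ hfactor, prod_mul_distrib, ← map_prod, ← Units.coe_prod,
    prod_univ_units_id_eq_neg_one, hreindex, prod_units_X_sub_C]
  simp

end FiniteField

theorem ZMod.prod_units_eq_prod_fin {p : ℕ} [Fact p.Prime] {M : Type*} [CommMonoid M]
    (f : ZMod p → M) : ∏ u : (ZMod p)ˣ, f u = ∏ i : Fin (p - 1), f ((i : ℕ) + 1) := by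
  have hp : p.Prime := Fact.out
  have hlt (i : Fin (p - 1)) : (i : ℕ) + 1 < p := by omega
  have hne (i : Fin (p - 1)) : ((i : ℕ) + 1 : ZMod p) ≠ 0 := by
    exact_mod_cast (natCast_eq_zero_iff _ _).not.mpr
      (Nat.not_dvd_of_pos_of_lt i.succ_pos (hlt i))
  have hinj : Function.Injective fun i : Fin (p - 1) => Units.mk0 _ (hne i) := by
    intro i j hij
    have h : (((i : ℕ) + 1 : ℕ) : ZMod p) = (((j : ℕ) + 1 : ℕ) : ZMod p) := by
      exact_mod_cast (Units.mk0_inj _ _).mp hij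
    rw [natCast_eq_natCast_iff', Nat.mod_eq_of_lt (hlt i), Nat.mod_eq_of_lt (hlt j)] at h
    exact Fin.ext (by omega)
  have hbij := (Fintype.bijective_iff_injective_and_card _).mpr
    ⟨hinj, by simp [Nat.totient_prime hp]⟩
  exact (Fintype.prod_bijective _ hbij _ _ fun _ => rfl).symm

/-- For a prime `p` and `k s : ℕ`, the sum over all tuples `(r_1,…,r_{p-1})`
of nonnegative integers with `Σ r_i = (p-1)s` of
`C(k,r_1)···C(k,r_{p-1})·1^{r_1}·2^{r_2}···(p-1)^{r_{p-1}}`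
is congruent to `(-1)^s·C(k,s)` mod `p`. -/
theorem weighted_binomial_sum_eq_choose (p k s : ℕ) (hp : p.Prime) :
    ((∑ r ∈ Finset.Nat.antidiagonalTuple (p - 1) ((p - 1) * s),
      ∏ i : Fin (p - 1), (k.choose (r i) : ℤ) * ((i : ℕ) + 1) ^ (r i) : ℤ) : ZMod p)
      = (-1) ^ s * (k.choose s : ZMod p) := by
  have : Fact p.Prime := ⟨hp⟩
  have hprod : ∏ i : Fin (p - 1), (1 + C (((i : ℕ) : ZMod p) + 1) * X) ^ k
      = (1 - X ^ (p - 1)) ^ k := by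
    rw [prod_pow, ← ZMod.prod_units_eq_prod_fin fun a => 1 + C a * X,
      FiniteField.prod_units_one_add_C_mul_X, ZMod.card]
  push_cast
  rw [mul_comm, ← coeff_one_sub_X_pow_pow_mul (Nat.sub_pos_of_lt hp.one_lt), ← hprod,
    coeff_prod_eq_sum_antidiagonalTuple]
  simp only [coeff_one_add_C_mul_X_pow]
end

section
/- For a prime p, integers j ≥ 0 and s with 0 ≤ s ≤ pj + p - 2, writing s = gp + h with 0 ≤ h < p, one has (-1)^s·C(pj+p-2, s) ≡ (h+1)·(-1)^g·C(j, g) mod p. -/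
lemma aux_choose (p : ℕ) (hp : p.Prime) :
    ∀ h : ℕ, h ≤ p - 1 →
      ((-1 : ZMod p)) ^ h * ((p - 2).choose h : ZMod p) = (h : ZMod p) + 1 := by
  haveI : Fact p.Prime := ⟨hp⟩
  intro h
  induction h with
  | zero => simp
  | succ h ih =>
    intro hle
    have h2 : 2 ≤ p := hp.two_le
    have hh : h ≤ p - 2 := by omega
    have ihh := ih (by omega)
    have key : ((p - 2).choose (h + 1) : ZMod p) * ((h : ZMod p) + 1)
        = ((p - 2).choose h : ZMod p) * (-((h : ZMod p) + 2)) := by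
      have := Nat.choose_succ_right_eq (p - 2) h
      have hcast : (((p - 2).choose (h + 1) * (h + 1) : ℕ) : ZMod p)
          = (((p - 2).choose h * (p - 2 - h) : ℕ) : ZMod p) := by rw [this]
      push_cast [Nat.cast_sub hh, Nat.cast_sub h2] at hcast
      rw [hcast]
      have : ((p : ZMod p)) = 0 := ZMod.natCast_self p
      rw [this]; ring
    have hunit : ((h : ZMod p) + 1) ≠ 0 := by
      have : ((h + 1 : ℕ) : ZMod p) ≠ 0 := by
        rw [Ne, ZMod.natCast_eq_zero_iff]
        intro hdvd
        have := Nat.le_of_dvd (by omega) hdvd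
        omega
      push_cast at this
      exact this
    have goal : ((-1 : ZMod p)) ^ (h + 1) * ((p - 2).choose (h + 1) : ZMod p)
        * ((h : ZMod p) + 1) = ((h : ZMod p) + 1 + 1) * ((h : ZMod p) + 1) := by
      calc ((-1 : ZMod p)) ^ (h + 1) * ((p - 2).choose (h + 1) : ZMod p) * ((h : ZMod p) + 1)
          = ((-1 : ZMod p)) ^ (h + 1) * (((p - 2).choose (h + 1) : ZMod p) * ((h : ZMod p) + 1)) := by ring
        _ = ((-1 : ZMod p)) ^ (h + 1) * (((p - 2).choose h : ZMod p) * (-((h : ZMod p) + 2))) := by rw [key]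
        _ = (((-1 : ZMod p)) ^ h * ((p - 2).choose h : ZMod p)) * ((h : ZMod p) + 2) := by ring
        _ = ((h : ZMod p) + 1) * ((h : ZMod p) + 2) := by rw [ihh]
        _ = ((h : ZMod p) + 1 + 1) * ((h : ZMod p) + 1) := by ring
    have := mul_right_cancel₀ hunit goal
    push_cast
    linear_combination this

/-- For a prime `p`, `j ≥ 0` and `0 ≤ s ≤ pj + p - 2`, writing `s = gp + h`
with `0 ≤ h < p`, one has `(-1)^s·C(pj+p-2, s) ≡ (h+1)·(-1)^g·C(j, g) mod p`. -/
theorem binom_lemma (p j s : ℕ) (hp : p.Prime) (hs : s ≤ p * j + p - 2) :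
    ((-1 : ZMod p)) ^ s * ((p * j + p - 2).choose s : ZMod p)
      = ((s % p : ℕ) + 1) * (-1) ^ (s / p) * (j.choose (s / p) : ZMod p) := by
  haveI : Fact p.Prime := ⟨hp⟩
  have h2 : 2 ≤ p := hp.two_le
  have hp0 : 0 < p := by omega
  have hn : p * j + p - 2 = p - 2 + p * j := by omega
  have hmod : (p * j + p - 2) % p = p - 2 := by
    rw [hn, Nat.add_mul_mod_self_left]
    exact Nat.mod_eq_of_lt (by omega)
  have hdiv : (p * j + p - 2) / p = j := by
    rw [hn, Nat.add_mul_div_left _ _ hp0, Nat.div_eq_of_lt (by omega)]; omega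
  -- Lucas
  have lucas := (Choose.choose_modEq_choose_mod_mul_choose_div_nat
      (n := p * j + p - 2) (k := s) (p := p))
  have lucas' : ((p * j + p - 2).choose s : ZMod p)
      = ((p - 2).choose (s % p) : ZMod p) * (j.choose (s / p) : ZMod p) := by
    have := (ZMod.natCast_eq_natCast_iff _ _ _).mpr lucas
    rw [hmod, hdiv] at this
    push_cast at this
    exact this
  -- sign
  have hsign : ((-1 : ZMod p)) ^ s = (-1) ^ (s % p) * (-1) ^ (s / p) := by
    conv_lhs => rw [← Nat.mod_add_div s p]
    rw [pow_add, pow_mul, neg_one_pow_char (ZMod p) p]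
  have hmodlt : s % p ≤ p - 1 := by
    have := Nat.mod_lt s hp0
    omega
  have haux := aux_choose p hp (s % p) hmodlt
  calc ((-1 : ZMod p)) ^ s * ((p * j + p - 2).choose s : ZMod p)
      = ((-1 : ZMod p)) ^ (s % p) * ((p - 2).choose (s % p) : ZMod p)
        * ((-1) ^ (s / p) * (j.choose (s / p) : ZMod p)) := by
        rw [hsign, lucas']; ring
    _ = ((s % p : ℕ) + 1) * (-1) ^ (s / p) * (j.choose (s / p) : ZMod p) := by
        rw [haux]; ring
end

section
/- Define polynomials p_n(b) by p_0(b) = 1 and p_n(b) = (n-1)!·(b-1)·Σ_{m=1}^{n} (-σ(m)·p_{n-m}(b))/((n-m)!), where σ(m) is the sum of divisors of m. Then each p_n(b) is a polynomial with integer coefficients. -/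
open Polynomial

/-- If `P 0 = 1` and `P n = (n-1)!·(b-1)·Σ_{m=1}^{n} (-σ(m)·P (n-m))/((n-m)!)`
(over `ℚ[b]`, with `σ` the sum-of-divisors function), then every `P n` has
integer coefficients. -/
theorem recurrence_integrality (P : ℕ → Polynomial ℚ)
    (h0 : P 0 = 1)
    (hrec : ∀ n : ℕ, 0 < n →
      P n = ((n - 1).factorial : ℚ) •
        ((Polynomial.X - 1) *
          ∑ m ∈ Finset.Icc 1 n,
            (-(∑ d ∈ m.divisors, (d : ℚ)) / ((n - m).factorial : ℚ)) • P (n - m))) :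
    ∀ n t, ∃ z : ℤ, (P n).coeff t = (z : ℚ) := by
  set S : Subring (Polynomial ℚ) := (Polynomial.mapRingHom (Int.castRingHom ℚ)).range with hS
  have hCmem : ∀ z : ℤ, (C ((z : ℚ)) : Polynomial ℚ) ∈ S := by
    intro z
    exact ⟨C z, by simp⟩
  have hXmem : (X - 1 : Polynomial ℚ) ∈ S := ⟨X - 1, by simp⟩
  have key : ∀ n, P n ∈ S := by
    intro n
    induction n using Nat.strong_induction_on with
    | _ n ih =>
      rcases Nat.eq_zero_or_pos n with h | hn
      · subst h; rw [h0]; exact one_mem S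
      · have hstep : P n = ∑ m ∈ Finset.Icc 1 n,
            C (((n - 1).factorial : ℚ) *
              (-(∑ d ∈ m.divisors, (d : ℚ)) / ((n - m).factorial : ℚ))) *
            ((X - 1) * P (n - m)) := by
          rw [hrec n hn, Polynomial.smul_eq_C_mul, Finset.mul_sum, Finset.mul_sum]
          refine Finset.sum_congr rfl fun m _ => ?_
          rw [Polynomial.smul_eq_C_mul, map_mul]
          ring
        rw [hstep]
        refine Subring.sum_mem S fun m hm => ?_
        simp only [Finset.mem_Icc] at hm
        have hd : (n - m).factorial ∣ (n - 1).factorial :=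
          Nat.factorial_dvd_factorial (by omega)
        have hcast : (((n - 1).factorial : ℚ) *
            (-(∑ d ∈ m.divisors, (d : ℚ)) / ((n - m).factorial : ℚ)))
            = ((-(∑ d ∈ m.divisors, (d : ℤ)) *
                (((n - 1).factorial / (n - m).factorial : ℕ) : ℤ) : ℤ) : ℚ) := by
          have h1 : (((n - 1).factorial / (n - m).factorial : ℕ) : ℚ)
              = ((n - 1).factorial : ℚ) / ((n - m).factorial : ℚ) :=
            Nat.cast_div hd (by positivity)
          rw [Int.cast_mul, Int.cast_neg, Int.cast_natCast, h1]
          push_cast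
          ring
        rw [hcast]
        exact Subring.mul_mem S (hCmem _)
          (Subring.mul_mem S hXmem (ih (n - m) (by omega)))
  intro n t
  obtain ⟨q, hq⟩ := key n
  exact ⟨q.coeff t, by rw [← hq]; simp [Polynomial.coeff_map]⟩
end

section
/- Define p_n(b) by the formal power series identity ∏_{k≥1}(1-q^k)^{b-1} = Σ_{n≥0} (q^n/n!)·p_n(b). Then the coefficient of b^t in p_n(b) equals (-1)^t · n! · Σ_{e ⊢ n} Σ_S 1/(s_1···s_t), where the outer sum is over partitions e = 1^{e_1}2^{e_2}··· of n, and the inner sum is over t-element subsets S = {s_1,...,s_t} of the multiset M_e = {1,...,e_1} ∪ {1,...,e_2} ∪ ···. -/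
open Polynomial PowerSeries

/-- The binomial-series expansion of `(1 - q^k)^(b-1)` as a formal power series
in `q` over `ℚ[b]` (with `b := X`): the coefficient of `q^(k·j)` is
`(-1)^j · binom(b-1, j) = (-1)^j · (b-1)(b-2)⋯(b-j)/j!`. -/
noncomputable def etaFactor (k : ℕ) : PowerSeries (Polynomial ℚ) :=
  PowerSeries.mk fun n =>
    if k ∣ n then
      (((-1) ^ (n / k) / ((n / k).factorial : ℚ)) : ℚ) •
        (descPochhammer (Polynomial ℚ) (n / k)).eval (Polynomial.X - 1)
    else 0

/-- `hanPoly n` is the polynomial `p_n(b)` defined by the formal power series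
identity `∏_{k≥1} (1-q^k)^(b-1) = Σ_{n≥0} (q^n/n!)·p_n(b)`; since factors with
`k > n` do not affect the coefficient of `q^n`, the infinite product may be
truncated at `k = n`. -/
noncomputable def hanPoly (n : ℕ) : Polynomial ℚ :=
  (n.factorial : ℚ) •
    PowerSeries.coeff n (∏ k ∈ Finset.Icc 1 n, etaFactor k)

/-- For a partition given by its multiset of parts, the multiset
`M_e = ∪_i {1, 2, ..., e_i}` where `e_i` is the number of parts equal to `i`. -/
def Mmultiset (parts : Multiset ℕ) : Multiset ℕ :=
  parts.dedup.bind fun i => (Multiset.range (parts.count i)).map (· + 1)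

/-! Each factor expands as `(1 - q^k)^(b-1) = ∑_j (-1)^j binom(b-1, j) q^(kj)`, and
`(-1)^j binom(b-1, j) = ∏_{s=1}^j (1 - b/s)`. Multiplying out over `k`, the coefficient of `q^n`
collects one term per partition `e ⊢ n`, taking `j = e_k` in the `k`-th factor; that term is
`∏_{s ∈ M_e} (1 - b/s)`, whose `b^t`-coefficient is `(-1)^t` times the elementary symmetric
function `e_t(1/s : s ∈ M_e)`. -/

namespace Nat.Partition

theorem exists_toFinsuppAntidiag_eq {n : ℕ} {g : ℕ →₀ ℕ}
    (hg : g ∈ (Finset.Icc 1 n).finsuppAntidiag n) (hdvd : ∀ k ∈ Finset.Icc 1 n, k ∣ g k) :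
    ∃ p : n.Partition, p.toFinsuppAntidiag = g := by
  obtain ⟨hsum, hsupp⟩ := Finset.mem_finsuppAntidiag.mp hg
  let p : n.Partition :=
    { parts := ∑ k ∈ Finset.Icc 1 n, Multiset.replicate (g k / k) k
      parts_pos := fun hi => by
        obtain ⟨k, hk, hik⟩ := Multiset.mem_sum.mp hi
        rw [Multiset.eq_of_mem_replicate hik]
        exact (Finset.mem_Icc.mp hk).1
      parts_sum := by
        rw [Multiset.sum_sum]
        refine (Finset.sum_congr rfl fun k hk => ?_).trans hsum
        rw [Multiset.sum_replicate, smul_eq_mul, Nat.div_mul_cancel (hdvd k hk)] }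
  refine ⟨p, Finsupp.ext fun k => ?_⟩
  have hcount : p.parts.count k = if k ∈ Finset.Icc 1 n then g k / k else 0 := by
    simp only [p, Multiset.count_sum', Multiset.count_replicate, Finset.sum_ite_eq']
  change p.parts.count k * k = g k
  rw [hcount]
  split_ifs with hk
  · exact Nat.div_mul_cancel (hdvd k hk)
  · rw [zero_mul, eq_comm, ← Finsupp.notMem_support_iff]
    exact fun h => hk (hsupp h)

end Nat.Partition

theorem PowerSeries.coeff_prod_Icc_eq_sum_partition {R : Type*} [CommSemiring R]
    (F : ℕ → PowerSeries R) (hF₀ : ∀ k, 0 < k → PowerSeries.constantCoeff (F k) = 1)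
    (hF : ∀ k, 0 < k → ∀ m, ¬ k ∣ m → PowerSeries.coeff m (F k) = 0) (n : ℕ) :
    PowerSeries.coeff n (∏ k ∈ Finset.Icc 1 n, F k) =
      ∑ p : n.Partition,
        ∏ k ∈ p.parts.toFinset, PowerSeries.coeff (p.parts.count k * k) (F k) := by
  rw [PowerSeries.coeff_prod, eq_comm]
  refine Finset.sum_of_injOn Nat.Partition.toFinsuppAntidiag
    (Nat.Partition.toFinsuppAntidiag_injective n).injOn
    (fun p _ => p.toFinsuppAntidiag_mem_finsuppAntidiag) (fun g hg hgp => ?_) (fun p _ => ?_)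
  · by_contra hne
    have hdvd : ∀ k ∈ Finset.Icc 1 n, k ∣ g k := fun k hk => by
      by_contra hndvd
      exact hne (Finset.prod_eq_zero hk (hF k (Finset.mem_Icc.mp hk).1 _ hndvd))
    obtain ⟨p, rfl⟩ := Nat.Partition.exists_toFinsuppAntidiag_eq hg hdvd
    exact hgp ⟨p, Finset.mem_coe.mpr (Finset.mem_univ p), rfl⟩
  · refine Finset.prod_subset (fun k hk => ?_) (fun k hk hkp => ?_)
    · have hk := Multiset.mem_toFinset.mp hk
      exact Finset.mem_Icc.mpr ⟨p.parts_pos hk, Nat.Partition.le_of_mem_parts hk⟩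
    · change PowerSeries.coeff (p.parts.count k * k) (F k) = 1
      rw [Multiset.count_eq_zero.mpr (fun h => hkp (Multiset.mem_toFinset.mpr h)), zero_mul,
        PowerSeries.coeff_zero_eq_constantCoeff_apply, hF₀ k (Finset.mem_Icc.mp hk).1]

theorem Multiset.esymm_cons {R : Type*} [CommSemiring R] (a : R) (s : Multiset R) (k : ℕ) :
    (a ::ₘ s).esymm (k + 1) = a * s.esymm k + s.esymm (k + 1) := by
  simp only [Multiset.esymm, Multiset.powersetCard_cons, Multiset.map_add, Multiset.sum_add,
    Multiset.map_map, Function.comp_def, Multiset.prod_cons, Multiset.sum_map_mul_left]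
  ring

theorem Polynomial.coeff_prod_one_sub_C_mul_X {ι R : Type*} [CommRing R] (s : Multiset ι)
    (r : ι → R) (t : ℕ) :
    (s.map fun i => 1 - Polynomial.C (r i) * Polynomial.X).prod.coeff t =
      (-1) ^ t * (s.map r).esymm t := by
  induction s using Multiset.induction generalizing t with
  | empty =>
    cases t <;> simp [Multiset.esymm, Polynomial.coeff_one, Multiset.powersetCard_zero_right]
  | cons a s ih =>
    cases t with
    | zero =>
      simp [Polynomial.mul_coeff_zero, ih 0, Multiset.esymm, Multiset.powersetCard_zero_left]
    | succ t =>
      rw [Multiset.map_cons, Multiset.prod_cons, sub_mul, one_mul, Polynomial.coeff_sub, mul_assoc,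
        Polynomial.coeff_C_mul, Polynomial.coeff_X_mul, ih, ih, Multiset.map_cons,
        Multiset.esymm_cons]
      ring

theorem smul_descPochhammer_eval_X_sub_one {K : Type*} [Field K] [CharZero K] (j : ℕ) :
    ((-1 : K) ^ j / j.factorial) • (descPochhammer K[X] j).eval (Polynomial.X - 1) =
      ∏ i ∈ Finset.range j, (1 - Polynomial.C ((i + 1 : K)⁻¹) * Polynomial.X) := by
  induction j with
  | zero => simp
  | succ j ih =>
    have hj : (j + 1 : K) ≠ 0 := by exact_mod_cast j.succ_ne_zero
    rw [Finset.prod_range_succ, ← ih, descPochhammer_succ_right, Polynomial.eval_mul,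
      Polynomial.eval_sub, Polynomial.eval_X, Polynomial.eval_natCast, Nat.factorial_succ,
      Polynomial.smul_eq_C_mul, Polynomial.smul_eq_C_mul]
    have hC : (Polynomial.C ((j + 1 : K)⁻¹) : K[X]) * (j + 1) = 1 := by
      rw [← Polynomial.C_eq_natCast, ← map_one Polynomial.C, ← Polynomial.C_add,
        ← Polynomial.C_mul, inv_mul_cancel₀ hj]
    have hcoef : (-1 : K) ^ (j + 1) / ((j + 1) * j.factorial : ℕ) =
        (-1) ^ j / j.factorial * -(j + 1 : K)⁻¹ := by
      push_cast
      field_simp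
      ring
    rw [hcoef, map_mul, map_neg]
    linear_combination (Polynomial.C ((-1 : K) ^ j / j.factorial) *
      (descPochhammer K[X] j).eval (Polynomial.X - 1)) * hC

theorem coeff_etaFactor_mul (j : ℕ) {k : ℕ} (hk : 0 < k) :
    PowerSeries.coeff (j * k) (etaFactor k) =
      ∏ i ∈ Finset.range j, (1 - Polynomial.C ((i + 1 : ℚ)⁻¹) * Polynomial.X) := by
  rw [etaFactor, PowerSeries.coeff_mk, if_pos (dvd_mul_left k j), Nat.mul_div_cancel j hk,
    smul_descPochhammer_eval_X_sub_one]

theorem coeff_etaFactor_of_not_dvd {k m : ℕ} (h : ¬ k ∣ m) :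
    PowerSeries.coeff m (etaFactor k) = 0 := by
  rw [etaFactor, PowerSeries.coeff_mk, if_neg h]

theorem constantCoeff_etaFactor {k : ℕ} (hk : 0 < k) :
    PowerSeries.constantCoeff (etaFactor k) = 1 := by
  rw [← PowerSeries.coeff_zero_eq_constantCoeff_apply, ← zero_mul k, coeff_etaFactor_mul 0 hk,
    Finset.prod_range_zero]

theorem prod_map_Mmultiset {M : Type*} [CommMonoid M] (parts : Multiset ℕ) (g : ℕ → M) :
    ((Mmultiset parts).map g).prod =
      ∏ k ∈ parts.toFinset, ∏ i ∈ Finset.range (parts.count k), g (i + 1) := by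
  simp [Mmultiset, Multiset.map_bind, Multiset.prod_bind, Finset.prod_eq_multiset_prod]

/-- In `S.map fun s => (s : ℚ)⁻¹` (as in `coeff_hanPoly_eq`) the cast is elaborated as the
coercion `Multiset ℕ → Multiset ℚ` applied to `S` before mapping. -/
theorem coeff_prod_one_sub_inv_mul_X (M : Multiset ℕ) (t : ℕ) :
    (M.map fun s : ℕ => 1 - Polynomial.C ((s : ℚ)⁻¹) * Polynomial.X).prod.coeff t =
      (-1) ^ t * ((M.powersetCard t).map fun S => (S.map fun s => (s : ℚ)⁻¹).prod).sum := by
  rw [Polynomial.coeff_prod_one_sub_C_mul_X, Multiset.esymm, Multiset.powersetCard_map,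
    Multiset.map_map]
  simp only [Function.comp_apply, Multiset.pure_def, Multiset.bind_def, Multiset.bind_singleton,
    Multiset.map_map]

/-- The coefficient of `b^t` in `p_n(b)` equals
`(-1)^t · n! · Σ_{e ⊢ n} Σ_{S ⊆ M_e, |S| = t} 1/(s_1⋯s_t)`. -/
theorem coeff_hanPoly_eq (n t : ℕ) :
    (hanPoly n).coeff t =
      (-1) ^ t * (n.factorial : ℚ) *
        ∑ e : n.Partition,
          (((Mmultiset e.parts).powersetCard t).map fun S =>
            (S.map fun s => ((s : ℚ))⁻¹).prod).sum := by
  have hcoeff : PowerSeries.coeff n (∏ k ∈ Finset.Icc 1 n, etaFactor k) =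
      ∑ e : n.Partition,
        ((Mmultiset e.parts).map fun s : ℕ =>
          1 - Polynomial.C ((s : ℚ)⁻¹) * Polynomial.X).prod := by
    rw [PowerSeries.coeff_prod_Icc_eq_sum_partition etaFactor (fun _ => constantCoeff_etaFactor)
      (fun _ _ _ => coeff_etaFactor_of_not_dvd)]
    refine Finset.sum_congr rfl fun e _ => ?_
    rw [prod_map_Mmultiset]
    refine Finset.prod_congr rfl fun k hk => ?_
    rw [coeff_etaFactor_mul _ (e.parts_pos (Multiset.mem_toFinset.mp hk))]
    simp only [Nat.cast_add, Nat.cast_one]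
  simp only [hanPoly, Polynomial.coeff_smul, hcoeff, Polynomial.finsetSum_coeff,
    coeff_prod_one_sub_inv_mul_X, smul_eq_mul, ← Finset.mul_sum]
  ring
end

section
/- For n = 5k+4, the coefficient of b^{k+1+4m+i} in p_n(b) (for i = 0,1,2,3 and 0 ≤ 4m+i ≤ 4k+3) is congruent mod 5 to c_i · (-1)^m · C(k,m), where (c_0,c_1,c_2,c_3) = (2,4,3,1). -/
/-!
Write `F = ∏_{j ≥ 1} (1 - q^j)^(b-1)`. Logarithmic differentiation gives
`F' = (1 - b) (∑_j j q^(j-1) / (1 - q^j)) F = (1 - b) (∑_t σ(t+1) q^t) F`, that is,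
`p_{n+1} = (1 - b) ∑_{t ≤ n} σ(t+1) n!/(n-t)! p_{n-t}`, a recurrence with integer coefficients.
Modulo 5 the falling factorial `n!/(n-t)!` depends only on `n mod 5` and vanishes for
`t > n mod 5`, so checking five polynomial identities shows that `∏_{i<n} (1 - b - 2i)` obeys the
same recurrence: `p_n(b) ≡ ∏_{i<n} (1 - b - 2i) (mod 5)`. The factors are 5-periodic in `i` with
`∏_{i<5} (1 - b - 2i) = b - b^5`, so `p_{5k+4} ≡ b^(k+1) (1 - b^4)^k (2 + 4b + 3b^2 + b^3)`,
and the coefficients come from `(1 - b^4)^k = ∑_m (-1)^m C(k,m) b^(4m)`.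
-/

open Polynomial PowerSeries

open Finset
open scoped ArithmeticFunction.sigma

section Generalities

variable {R : Type*} [CommRing R]

theorem PowerSeries.derivative_prod_of_eq_mul {ι : Type*} (s : Finset ι) (f g : ι → R⟦X⟧)
    (h : ∀ j ∈ s, d⁄dX R (f j) = g j * f j) :
    d⁄dX R (∏ j ∈ s, f j) = (∑ j ∈ s, g j) * ∏ j ∈ s, f j := by
  classical
  induction s using Finset.induction_on with
  | empty => simp
  | insert a s ha ih =>
    rw [prod_insert ha, sum_insert ha, Derivation.leibniz, smul_eq_mul, smul_eq_mul,
      ih fun j hj => h j (mem_insert_of_mem hj), h a (mem_insert_self a s)]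
    ring

theorem PowerSeries.coeff_mul_prod_of_X_pow_dvd_sub_one {ι : Type*} {n : ℕ} (s : Finset ι)
    (f : ι → R⟦X⟧) (h : ∀ j ∈ s, PowerSeries.X ^ (n + 1) ∣ f j - 1) (g : R⟦X⟧) :
    PowerSeries.coeff n (g * ∏ j ∈ s, f j) = PowerSeries.coeff n g := by
  classical
  have hprod : PowerSeries.X ^ (n + 1) ∣ ∏ j ∈ s, f j - 1 := by
    induction s using Finset.induction_on with
    | empty => simp
    | insert a s ha ih =>
      rw [prod_insert ha,
        show f a * ∏ j ∈ s, f j - 1 = f a * (∏ j ∈ s, f j - 1) + (f a - 1) by ring]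
      exact dvd_add (dvd_mul_of_dvd_right (ih fun j hj => h j (mem_insert_of_mem hj)) _)
        (h a (mem_insert_self a s))
  obtain ⟨r, hr⟩ := hprod
  rw [show ∏ j ∈ s, f j = 1 + PowerSeries.X ^ (n + 1) * r by rw [← hr]; ring, mul_add, mul_one,
    map_add, mul_left_comm, PowerSeries.coeff_X_pow_mul', if_neg (by omega), add_zero]

variable (R) in
/-- The series `j q^(j-1) / (1 - q^j) = -(d/dq) log (1 - q^j)`. -/
noncomputable def lambertTerm (j : ℕ) : R⟦X⟧ :=
  PowerSeries.mk fun t => if j ∣ t + 1 then (j : R) else 0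

theorem lambertTerm_eq_mul_expand {j : ℕ} (hj : j ≠ 0) :
    lambertTerm R j =
      PowerSeries.C (j : R) * PowerSeries.X ^ (j - 1) *
        PowerSeries.expand j hj (PowerSeries.mk 1) := by
  ext t
  rw [lambertTerm, PowerSeries.coeff_mk, mul_assoc, PowerSeries.coeff_C_mul,
    PowerSeries.coeff_X_pow_mul', PowerSeries.coeff_expand]
  by_cases ht : j - 1 ≤ t
  · have : j ∣ t + 1 ↔ j ∣ t - (j - 1) := by
      rw [show t + 1 = t - (j - 1) + j by omega, Nat.dvd_add_self_right]
    simp [ht, this]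
  · have : ¬ j ∣ t + 1 := fun hd => ht (by have := Nat.le_of_dvd (by omega) hd; omega)
    simp [ht, this]

theorem derivative_expand_eq_lambertTerm_mul {f : R⟦X⟧} {c : R}
    (hf : d⁄dX R f = PowerSeries.C c * PowerSeries.mk 1 * f) {j : ℕ} (hj : j ≠ 0) :
    d⁄dX R (PowerSeries.expand j hj f) =
      PowerSeries.C c * lambertTerm R j * PowerSeries.expand j hj f := by
  rw [PowerSeries.expand_apply, PowerSeries.derivative_subst (PowerSeries.HasSubst.X_pow hj),
    ← PowerSeries.expand_apply j hj, hf, map_mul, map_mul, PowerSeries.expand_C,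
    PowerSeries.derivative_pow, PowerSeries.derivative_X, lambertTerm_eq_mul_expand hj,
    ← map_natCast PowerSeries.C, ← PowerSeries.expand_apply j hj f]
  ring

theorem coeff_sum_lambertTerm {t N : ℕ} (ht : t < N) :
    PowerSeries.coeff t (∑ j ∈ Icc 1 N, lambertTerm R j) = (σ 1 (t + 1) : R) := by
  have hdiv : (Icc 1 N).filter (· ∣ t + 1) = (t + 1).divisors := by
    ext d
    simp only [mem_filter, mem_Icc, Nat.mem_divisors]
    constructor
    · rintro ⟨-, hd⟩
      exact ⟨hd, by omega⟩
    · rintro ⟨hd, -⟩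
      exact ⟨⟨Nat.pos_of_dvd_of_pos hd (by omega), (Nat.le_of_dvd (by omega) hd).trans ht⟩,
        hd⟩
  simp only [map_sum, lambertTerm, PowerSeries.coeff_mk]
  rw [← sum_filter, hdiv, ArithmeticFunction.sigma_one_apply, Nat.cast_sum]

end Generalities

theorem Polynomial.coeff_one_sub_X_pow {R : Type*} [CommRing R] (k m : ℕ) :
    ((1 - Polynomial.X : R[X]) ^ k).coeff m = (-1) ^ m * k.choose m := by
  have h : (1 - Polynomial.X : R[X]) ^ k = C ((-1) ^ k) * (Polynomial.X + C (-1)) ^ k := by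
    rw [map_pow, map_neg, map_one, ← mul_pow]
    ring
  rw [h, coeff_C_mul, coeff_X_add_C_pow]
  rcases le_or_gt m k with hmk | hmk
  · obtain ⟨j, rfl⟩ := Nat.exists_eq_add_of_le hmk
    have hsq : ((-1 : R) ^ j) ^ 2 = 1 := by
      rw [← pow_mul, mul_comm, pow_mul, neg_one_sq, one_pow]
    rw [Nat.add_sub_cancel_left, pow_add]
    linear_combination ((-1) ^ m * ((m + j).choose m : R)) * hsq
  · simp [Nat.choose_eq_zero_of_lt hmk]

theorem Polynomial.coeff_expand_mul_of_natDegree_lt {R : Type*} [CommSemiring R] {d : ℕ}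
    (f g : R[X]) (hg : g.natDegree < d) (m : ℕ) {i : ℕ} (hi : i < d) :
    (expand R d f * g).coeff (d * m + i) = f.coeff m * g.coeff i := by
  have hd : 0 < d := by omega
  rw [coeff_mul, sum_eq_single (d * m, i), coeff_expand_mul' hd]
  · rintro ⟨a, b⟩ hab hne
    rw [HasAntidiagonal.mem_antidiagonal] at hab
    dsimp only at hab ⊢
    rw [coeff_expand hd]
    by_cases hb : b < d
    · have hda : ¬ d ∣ a := by
        rintro ⟨c, rfl⟩
        have hc : c = m := by
          have := congrArg (· / d) hab
          simpa [Nat.mul_add_div hd, Nat.div_eq_of_lt hb, Nat.div_eq_of_lt hi] using this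
        subst hc
        exact hne (Prod.ext rfl (by simp only; omega))
      rw [if_neg hda, zero_mul]
    · rw [coeff_eq_zero_of_natDegree_lt (p := g) (by omega), mul_zero]
  · simp

theorem coeff_etaFactor_one (m : ℕ) :
    PowerSeries.coeff m (etaFactor 1) =
      ((-1) ^ m / (m.factorial : ℚ)) • (descPochhammer ℚ[X] m).eval (Polynomial.X - 1) := by
  simp [etaFactor]

theorem etaFactor_eq_expand {j : ℕ} (hj : j ≠ 0) :
    etaFactor j = PowerSeries.expand j hj (etaFactor 1) := by
  ext n : 1
  rw [PowerSeries.coeff_expand, coeff_etaFactor_one, etaFactor, PowerSeries.coeff_mk]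

theorem succ_mul_coeff_succ_etaFactor_one (m : ℕ) :
    ((m : ℚ[X]) + 1) * PowerSeries.coeff (m + 1) (etaFactor 1) =
      ((m : ℚ[X]) + 1 - Polynomial.X) * PowerSeries.coeff m (etaFactor 1) := by
  have hfac : ((m : ℚ) + 1) * ((-1) ^ (m + 1) / ((m + 1).factorial : ℚ)) =
      -((-1) ^ m / (m.factorial : ℚ)) := by
    rw [Nat.factorial_succ]
    push_cast
    field_simp
    ring
  rw [coeff_etaFactor_one, coeff_etaFactor_one, descPochhammer_succ_right, eval_mul,
    Polynomial.smul_eq_C_mul, Polynomial.smul_eq_C_mul]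
  have hC : ((m : ℚ[X]) + 1) = Polynomial.C ((m : ℚ) + 1) := by simp
  rw [hC, ← mul_assoc, ← map_mul, hfac]
  simp only [eval_sub, eval_X, eval_natCast, map_neg, map_add, map_natCast, map_one]
  ring

theorem derivative_etaFactor_one :
    d⁄dX ℚ[X] (etaFactor 1) =
      PowerSeries.C (1 - Polynomial.X) * PowerSeries.mk 1 * etaFactor 1 := by
  have hode : (1 - PowerSeries.X) * d⁄dX ℚ[X] (etaFactor 1) =
      PowerSeries.C (1 - Polynomial.X) * etaFactor 1 := by
    ext n : 1
    rw [sub_mul, one_mul, map_sub, PowerSeries.coeff_C_mul]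
    rcases n with _ | m
    · simp only [PowerSeries.coeff_zero_X_mul, sub_zero, PowerSeries.coeff_derivative]
      have := succ_mul_coeff_succ_etaFactor_one 0
      push_cast at this ⊢
      linear_combination this
    · rw [PowerSeries.coeff_succ_X_mul, PowerSeries.coeff_derivative,
        PowerSeries.coeff_derivative]
      have := succ_mul_coeff_succ_etaFactor_one (m + 1)
      push_cast at this ⊢
      linear_combination this
  rw [← one_mul (d⁄dX ℚ[X] (etaFactor 1)), ← PowerSeries.mk_one_mul_one_sub_eq_one, mul_assoc,
    hode]
  ring

theorem derivative_etaFactor {j : ℕ} (hj : j ≠ 0) :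
    d⁄dX ℚ[X] (etaFactor j) =
      PowerSeries.C (1 - Polynomial.X) * lambertTerm ℚ[X] j * etaFactor j := by
  rw [etaFactor_eq_expand hj]
  exact derivative_expand_eq_lambertTerm_mul derivative_etaFactor_one hj

theorem X_pow_dvd_etaFactor_sub_one {j : ℕ} (hj : j ≠ 0) :
    PowerSeries.X ^ j ∣ etaFactor j - 1 := by
  have hX : PowerSeries.X ∣ etaFactor 1 - 1 := by
    rw [PowerSeries.X_dvd_iff, map_sub, ← PowerSeries.coeff_zero_eq_constantCoeff_apply,
      coeff_etaFactor_one]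
    simp
  rw [etaFactor_eq_expand hj, ← map_one (PowerSeries.expand j hj), ← map_sub,
    ← PowerSeries.expand_X j hj]
  exact map_dvd _ hX

theorem coeff_prod_etaFactor_of_le {n N : ℕ} (h : n ≤ N) :
    PowerSeries.coeff n (∏ j ∈ Icc 1 N, etaFactor j) =
      PowerSeries.coeff n (∏ j ∈ Icc 1 n, etaFactor j) := by
  rw [← prod_sdiff (Icc_subset_Icc_right h), mul_comm]
  refine PowerSeries.coeff_mul_prod_of_X_pow_dvd_sub_one _ _ (fun j hj => ?_) _
  have hnj : n + 1 ≤ j := by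
    simp only [mem_sdiff, mem_Icc] at hj
    omega
  exact (pow_dvd_pow _ hnj).trans (X_pow_dvd_etaFactor_sub_one (by omega))

theorem hanPoly_eq_mul_coeff {n N : ℕ} (h : n ≤ N) :
    hanPoly n = (n.factorial : ℚ[X]) * PowerSeries.coeff n (∏ j ∈ Icc 1 N, etaFactor j) := by
  rw [hanPoly, coeff_prod_etaFactor_of_le h, Nat.cast_smul_eq_nsmul, nsmul_eq_mul]

theorem derivative_prod_etaFactor (N : ℕ) :
    d⁄dX ℚ[X] (∏ j ∈ Icc 1 N, etaFactor j) =
      PowerSeries.C (1 - Polynomial.X) * (∑ j ∈ Icc 1 N, lambertTerm ℚ[X] j) *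
        ∏ j ∈ Icc 1 N, etaFactor j := by
  rw [PowerSeries.derivative_prod_of_eq_mul _ _ _ fun j hj =>
    derivative_etaFactor (Nat.one_le_iff_ne_zero.mp (mem_Icc.mp hj).1), mul_sum]

theorem hanPoly_succ (n : ℕ) :
    hanPoly (n + 1) = (1 - Polynomial.X) * ∑ t ∈ range (n + 1),
      ((σ 1 (t + 1) * n.descFactorial t : ℕ) : ℚ[X]) * hanPoly (n - t) := by
  set a : ℕ → ℚ[X] := fun s => PowerSeries.coeff s (∏ j ∈ Icc 1 (n + 1), etaFactor j)
  have hrec : a (n + 1) * ((n : ℚ[X]) + 1) =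
      (1 - Polynomial.X) * ∑ t ∈ range (n + 1), (σ 1 (t + 1) : ℚ[X]) * a (n - t) := by
    have := congrArg (PowerSeries.coeff n) (derivative_prod_etaFactor (n + 1))
    rw [PowerSeries.coeff_derivative, mul_assoc, PowerSeries.coeff_C_mul, PowerSeries.coeff_mul,
      Nat.sum_antidiagonal_eq_sum_range_succ_mk] at this
    push_cast at this
    rw [this]
    congr 1
    refine sum_congr rfl fun t ht => ?_
    rw [coeff_sum_lambertTerm (mem_range.mp ht)]
  calc hanPoly (n + 1) = (n.factorial : ℚ[X]) * (a (n + 1) * ((n : ℚ[X]) + 1)) := by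
        rw [hanPoly_eq_mul_coeff le_rfl, Nat.factorial_succ]
        push_cast
        ring
    _ = (1 - Polynomial.X) * ∑ t ∈ range (n + 1),
          (σ 1 (t + 1) : ℚ[X]) * ((n.factorial : ℚ[X]) * a (n - t)) := by
        rw [hrec, mul_sum, mul_sum, mul_sum]
        refine sum_congr rfl fun t _ => by ring
    _ = _ := by
        refine congrArg _ (sum_congr rfl fun t ht => ?_)
        rw [hanPoly_eq_mul_coeff (by omega : n - t ≤ n + 1),
          ← Nat.factorial_mul_descFactorial (Nat.lt_succ_iff.mp (mem_range.mp ht))]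
        push_cast
        ring

section HanPolyOver

variable (A : Type*) [CommRing A]

noncomputable def hanPolyOver : ℕ → A[X]
  | 0 => 1
  | n + 1 => (1 - Polynomial.X) * ∑ t ∈ range (n + 1),
      ((σ 1 (t + 1) * n.descFactorial t : ℕ) : A[X]) * hanPolyOver (n - t)

theorem hanPolyOver_succ (n : ℕ) :
    hanPolyOver A (n + 1) = (1 - Polynomial.X) * ∑ t ∈ range (n + 1),
      ((σ 1 (t + 1) * n.descFactorial t : ℕ) : A[X]) * hanPolyOver A (n - t) := by
  rw [hanPolyOver]

variable {A} in
theorem map_hanPolyOver {B : Type*} [CommRing B] (f : A →+* B) (n : ℕ) :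
    (hanPolyOver A n).map f = hanPolyOver B n := by
  induction n using Nat.strong_induction_on with
  | _ n ih =>
    rcases n with _ | n
    · simp [hanPolyOver]
    · simp only [hanPolyOver_succ, Polynomial.map_mul, Polynomial.map_sub, Polynomial.map_one,
        Polynomial.map_X, Polynomial.map_sum, Polynomial.map_natCast]
      exact congrArg _ (sum_congr rfl fun t _ => by rw [ih _ (by omega)])

end HanPolyOver

theorem hanPoly_eq_hanPolyOver (n : ℕ) : hanPoly n = hanPolyOver ℚ n := by
  induction n using Nat.strong_induction_on with
  | _ n ih =>
    rcases n with _ | n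
    · simp [hanPoly, hanPolyOver]
    · rw [hanPoly_succ, hanPolyOver_succ]
      exact congrArg _ (sum_congr rfl fun t _ => by rw [ih _ (by omega)])

noncomputable def hanModFive (n : ℕ) : (ZMod 5)[X] :=
  ∏ i ∈ range n, (1 - Polynomial.X - 2 * (i : (ZMod 5)[X]))

theorem hanModFive_five_mul_add (q j : ℕ) :
    hanModFive (5 * q + j) = hanModFive (5 * q) * hanModFive j := by
  rw [hanModFive, prod_range_add]
  congr 1
  refine prod_congr rfl fun i _ => ?_
  rw [Nat.cast_add, Nat.cast_mul, CharP.cast_eq_zero, zero_mul, zero_add]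

theorem hanModFive_five : hanModFive 5 = Polynomial.X - Polynomial.X ^ 5 := by
  rw [← sub_eq_zero]
  simp only [hanModFive, prod_range_succ, prod_range_zero]
  push_cast
  ring_nf
  reduce_mod_char

theorem hanModFive_four :
    hanModFive 4 =
      Polynomial.X * (2 + 4 * Polynomial.X + 3 * Polynomial.X ^ 2 + Polynomial.X ^ 3) := by
  rw [← sub_eq_zero]
  simp only [hanModFive, prod_range_succ, prod_range_zero]
  push_cast
  ring_nf
  reduce_mod_char

theorem hanModFive_five_mul (q : ℕ) :
    hanModFive (5 * q) = (Polynomial.X - Polynomial.X ^ 5) ^ q := by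
  induction q with
  | zero => simp [hanModFive]
  | succ q ih => rw [mul_add_one, hanModFive_five_mul_add, ih, hanModFive_five, ← pow_succ]

theorem hanModFive_succ_of_lt_five {r : ℕ} (hr : r < 5) :
    hanModFive (r + 1) = (1 - Polynomial.X) * ∑ t ∈ range (r + 1),
      ((σ 1 (t + 1) * r.descFactorial t : ℕ) : (ZMod 5)[X]) * hanModFive (r - t) := by
  have h1 : σ 1 1 = 1 := by decide
  have h2 : σ 1 2 = 3 := by decide
  have h3 : σ 1 3 = 4 := by decide
  have h4 : σ 1 4 = 7 := by decide
  have h5 : σ 1 5 = 6 := by decide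
  rw [← sub_eq_zero]
  interval_cases r <;>
  simp only [hanModFive, sum_range_succ, sum_range_zero, prod_range_succ, prod_range_zero,
    Nat.descFactorial, h1, h2, h3, h4, h5] <;>
  push_cast <;> ring_nf <;> reduce_mod_char

theorem hanModFive_succ (n : ℕ) :
    hanModFive (n + 1) = (1 - Polynomial.X) * ∑ t ∈ range (n + 1),
      ((σ 1 (t + 1) * n.descFactorial t : ℕ) : (ZMod 5)[X]) * hanModFive (n - t) := by
  obtain ⟨q, r, hr, rfl⟩ : ∃ q r, r < 5 ∧ n = 5 * q + r := ⟨n / 5, n % 5, by omega, by omega⟩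
  have hdesc (t : ℕ) :
      (((5 * q + r).descFactorial t : ℕ) : (ZMod 5)[X]) = r.descFactorial t := by
    rw [← descPochhammer_eval_eq_descFactorial, ← descPochhammer_eval_eq_descFactorial,
      Nat.cast_add, Nat.cast_mul, CharP.cast_eq_zero, zero_mul, zero_add]
  have hvanish : ∀ t ∈ range (5 * q + r + 1), t ∉ range (r + 1) →
      ((σ 1 (t + 1) * (5 * q + r).descFactorial t : ℕ) : (ZMod 5)[X]) *
        hanModFive (5 * q + r - t) = 0 := by
    intro t _ ht
    rw [Nat.cast_mul, hdesc, Nat.descFactorial_eq_zero_iff_lt.mpr (by simpa using ht)]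
    simp
  rw [← sum_subset (range_subset_range.mpr (by omega)) hvanish, add_assoc,
    hanModFive_five_mul_add, hanModFive_succ_of_lt_five hr, mul_left_comm, mul_sum]
  refine congrArg _ (sum_congr rfl fun t ht => ?_)
  rw [mem_range] at ht
  rw [Nat.cast_mul, Nat.cast_mul, hdesc, Nat.add_sub_assoc (by omega), hanModFive_five_mul_add]
  ring

theorem hanPolyOver_zmod_five (n : ℕ) : hanPolyOver (ZMod 5) n = hanModFive n := by
  induction n using Nat.strong_induction_on with
  | _ n ih =>
    rcases n with _ | n
    · simp [hanPolyOver, hanModFive]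
    · rw [hanPolyOver_succ, hanModFive_succ]
      exact congrArg _ (sum_congr rfl fun t _ => by rw [ih _ (by omega)])

theorem coeff_rotation_mod_five_general (k m i : ℕ) (hi : i < 4)
    (P : Polynomial ℤ)
    (hP : P.map (Int.castRingHom ℚ) = hanPoly (5 * k + 4)) :
    ((P.coeff (k + 1 + 4 * m + i) : ZMod 5)) =
      (if i = 0 then 2 else if i = 1 then 4 else if i = 2 then 3 else 1) *
        (-1) ^ m * (k.choose m : ZMod 5) := by
  have hPint : P = hanPolyOver ℤ (5 * k + 4) :=
    map_injective _ Int.cast_injective (by rw [hP, map_hanPolyOver, hanPoly_eq_hanPolyOver])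
  have hmod : P.map (Int.castRingHom (ZMod 5)) = Polynomial.X ^ (k + 1) *
      (expand (ZMod 5) 4 ((1 - Polynomial.X) ^ k) *
        (2 + 4 * Polynomial.X + 3 * Polynomial.X ^ 2 + Polynomial.X ^ 3)) := by
    rw [hPint, map_hanPolyOver, hanPolyOver_zmod_five, hanModFive_five_mul_add,
      hanModFive_five_mul, hanModFive_four,
      show (Polynomial.X - Polynomial.X ^ 5 : (ZMod 5)[X]) =
        Polynomial.X * (1 - Polynomial.X ^ 4) by ring, mul_pow]
    simp only [map_pow, map_sub, map_one, Polynomial.expand_X]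
    ring
  have hdeg : (2 + 4 * Polynomial.X + 3 * Polynomial.X ^ 2 + Polynomial.X ^ 3 :
      (ZMod 5)[X]).natDegree < 4 := by
    compute_degree!
  have hcoeff : (2 + 4 * Polynomial.X + 3 * Polynomial.X ^ 2 + Polynomial.X ^ 3 :
      (ZMod 5)[X]).coeff i = if i = 0 then 2 else if i = 1 then 4 else if i = 2 then 3 else 1 := by
    interval_cases i <;> simp [Polynomial.coeff_X]
  rw [← eq_intCast (Int.castRingHom (ZMod 5)), ← Polynomial.coeff_map, hmod,
    show k + 1 + 4 * m + i = 4 * m + i + (k + 1) by ring, Polynomial.coeff_X_pow_mul,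
    coeff_expand_mul_of_natDegree_lt _ _ hdeg _ hi, coeff_one_sub_X_pow, hcoeff]
  ring

/-- For `n = 5k+4` and `i = 0,1,2,3`, the coefficient of `b^{k+1+4m+i}` in
`p_n(b)` is congruent mod 5 to `c_i·(-1)^m·C(k,m)` where
`(c_0,c_1,c_2,c_3) = (2,4,3,1)`. -/
theorem coeff_rotation_mod_five (k m i : ℕ) (hi : i < 4) (hmi : 4 * m + i ≤ 4 * k + 3)
    (P : Polynomial ℤ)
    (hP : P.map (Int.castRingHom ℚ) = hanPoly (5 * k + 4)) :
    ((P.coeff (k + 1 + 4 * m + i) : ZMod 5)) =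
      (if i = 0 then 2 else if i = 1 then 4 else if i = 2 then 3 else 1) *
        (-1) ^ m * (k.choose m : ZMod 5) :=
  coeff_rotation_mod_five_general k m i hi P hP
end

section
/- If n = 5k+4 and e = 1^{e_1}2^{e_2}··· is a partition of n with e_1 < 5k, then for every t-element subset S = {s_1,...,s_t} of the multiset M_e, the rational number n!/(s_1···s_t) is an integer divisible by 5. -/
open Nat

theorem succ_mul_factorial_mul_factorial_dvd_factorial {a b j m : ℕ} (ha : a ≤ m)
    (hab : a + 2 * b ≤ m + (j + 1)) : (j + 1) * (a ! * b !) ∣ (m + (j + 1))! := by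
  have hdvd : a ! * b ! ∣ m ! * j ! := by
    rcases le_or_gt b j with hb | hb
    · exact mul_dvd_mul (factorial_dvd_factorial ha) (factorial_dvd_factorial hb)
    · exact (factorial_mul_factorial_dvd_factorial_add a b).trans
        ((factorial_dvd_factorial (by omega)).trans (dvd_mul_right _ _))
  calc (j + 1) * (a ! * b !) ∣ (j + 1) * (m ! * j !) := mul_dvd_mul_left _ hdvd
    _ = m ! * (j + 1)! := by rw [factorial_succ]; ring
    _ ∣ (m + (j + 1))! := factorial_mul_factorial_dvd_factorial_add m (j + 1)

theorem Multiset.prod_factorial_count_dvd {α : Type*} [DecidableEq α] (P : Multiset α) (x : α) :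
    ∏ i ∈ P.toFinset, (P.count i)! ∣ (P.count x)! * (P.filter (· ≠ x)).card ! := by
  have hsplit : ∏ i ∈ P.toFinset, (P.count i)!
      = (P.count x)! * ∏ i ∈ (P.filter (· ≠ x)).toFinset, ((P.filter (· ≠ x)).count i)! := by
    rw [← Finset.prod_insert_of_eq_one_if_notMem (s := P.toFinset) (a := x)
      (fun hx => by rw [count_eq_zero_of_notMem (by simpa using hx), factorial_zero]),
      ← Finset.mul_prod_erase _ _ (Finset.mem_insert_self x _), Finset.erase_insert_eq_erase,
      toFinset_filter, Finset.filter_ne']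
    refine congrArg _ (Finset.prod_congr rfl fun i hi => ?_)
    rw [count_filter_of_pos (p := (· ≠ x)) (Finset.ne_of_mem_erase hi)]
  rw [hsplit, ← toFinset_sum_count_eq]
  exact mul_dvd_mul_left _ (prod_factorial_dvd_factorial_sum _ _)

theorem prod_Mmultiset (P : Multiset ℕ) :
    (Mmultiset P).prod = ∏ i ∈ P.toFinset, (P.count i)! := by
  simp only [Mmultiset, Multiset.prod_bind, Finset.prod_eq_multiset_prod, Multiset.toFinset_val]
  congr 2
  ext c
  rw [← Finset.prod_range_add_one_eq_factorial]
  rfl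

theorem Nat.Partition.count_one_add_two_mul_card_filter_ne_one_le {n : ℕ} (e : n.Partition) :
    e.parts.count 1 + 2 * (e.parts.filter (· ≠ 1)).card ≤ n := by
  have hge : (e.parts.filter (· ≠ 1)).card • 2 ≤ (e.parts.filter (· ≠ 1)).sum :=
    Multiset.card_nsmul_le_sum fun i hi => by
      obtain ⟨hi, hi1⟩ := Multiset.mem_filter.1 hi
      have := e.parts_pos hi
      omega
  have hsum : e.parts.count 1 + (e.parts.filter (· ≠ 1)).sum = n := by
    conv_rhs => rw [← e.parts_sum, ← Multiset.filter_add_not (· = 1) e.parts]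
    rw [Multiset.sum_add, Multiset.filter_eq', Multiset.sum_replicate, smul_eq_mul, mul_one]
  rw [smul_eq_mul] at hge
  omega

/-- If `n = 5k+4` and `e` is a partition of `n` with fewer than `5k` parts
equal to 1, then for every submultiset `S = {s_1,…,s_t}` of `M_e`, the
rational number `n!/(s_1⋯s_t)` is an integer divisible by 5. -/
theorem factorial_div_prod_divisible (k n : ℕ) (hn : n = 5 * k + 4)
    (e : n.Partition) (he : e.parts.count 1 < 5 * k)
    (S : Multiset ℕ) (hS : S ≤ Mmultiset e.parts) :
    ∃ z : ℤ, (5 : ℤ) ∣ z ∧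
      (n.factorial : ℚ) / (S.map fun s => (s : ℚ)).prod = (z : ℚ) := by
  have hdvd : 5 * S.prod ∣ n ! := by
    have hbound := e.count_one_add_two_mul_card_filter_ne_one_le
    have hkey := succ_mul_factorial_mul_factorial_dvd_factorial (j := 4) (m := n - 5)
      (b := (e.parts.filter (· ≠ 1)).card)
      (show e.parts.count 1 ≤ n - 5 by omega) (by omega)
    rw [show n - 5 + (4 + 1) = n by omega] at hkey
    refine (mul_dvd_mul_left 5 ?_).trans hkey
    exact (Multiset.prod_dvd_prod_of_le hS).trans
      (prod_Mmultiset e.parts ▸ e.parts.prod_factorial_count_dvd 1)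
  obtain ⟨c, hc⟩ := hdvd
  have hS0 : (S.prod : ℚ) ≠ 0 := by
    intro h
    exact factorial_ne_zero n (by rw [hc, Nat.cast_eq_zero.1 h, mul_zero, zero_mul])
  have hcast : (S.map fun s => (s : ℚ)).prod = (S.prod : ℚ) := by simp
  refine ⟨5 * c, dvd_mul_right 5 _, ?_⟩
  rw [hcast, div_eq_iff hS0, hc]
  push_cast
  ring
end
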